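/- Suppose (u_h, r_h, w_h, p_h, s_h) solves the conservative semi-discrete LDG Scheme C2 on [0,T]. Then for every t ∈ [0,T] the energy identity ∫_a^b ( s_h + ∂_t u_h )² dx + ∫_a^b ( p_h + ∂_t r_h )² dx + ∫_a^b u_h ( p_h + ∂_t r_h ) dx = 0 holds. -/

import Mathlib

open Polynomial Set

noncomputable section

namespace FW

variable {N : ℕ}

/-- Minus trace `ω⁻` at interface `j+1/2` (right end of cell `j`). -/
def trM (x : Fin (N + 1) → ℝ) (ω : Fin N → Polynomial ℝ) (j : Fin N) : ℝ :=
  (ω j).eval (x j.succ)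

/-- Plus trace `ω⁺` at interface `j+1/2` (left end of the next cell, cyclically). -/
def trP [NeZero N] (x : Fin (N + 1) → ℝ) (ω : Fin N → Polynomial ℝ) (j : Fin N) : ℝ :=
  (ω (j + 1)).eval (x (j + 1).castSucc)

/-- Average trace `{ω}`. -/
def trA [NeZero N] (x : Fin (N + 1) → ℝ) (ω : Fin N → Polynomial ℝ) (j : Fin N) : ℝ :=
  (trP x ω j + trM x ω j) / 2

/-- Jump `[ω]`. -/
def jmp [NeZero N] (x : Fin (N + 1) → ℝ) (ω : Fin N → Polynomial ℝ) (j : Fin N) : ℝ :=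
  trP x ω j - trM x ω j

/-- Cell L² pairing `(u, φ)_{I_j}` of a piecewise polynomial with a test polynomial. -/
def ipj (x : Fin (N + 1) → ℝ) (u : Fin N → Polynomial ℝ) (j : Fin N) (φ : Polynomial ℝ) : ℝ :=
  ∫ t in (x j.castSucc)..(x j.succ), (u j).eval t * φ.eval t

/-- Cell pairing `(f∘u, φ)_{I_j}`. -/
def ipfj (x : Fin (N + 1) → ℝ) (f : ℝ → ℝ) (u : Fin N → Polynomial ℝ) (j : Fin N)
    (φ : Polynomial ℝ) : ℝ :=
  ∫ t in (x j.castSucc)..(x j.succ), f ((u j).eval t) * φ.eval t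

/-- Boundary pairing `⟨g, φ⟩_{I_j}` for interface values `g`. -/
def bdj [NeZero N] (x : Fin (N + 1) → ℝ) (g : Fin N → ℝ) (j : Fin N) (φ : Polynomial ℝ) : ℝ :=
  g j * φ.eval (x j.succ) - g (j - 1) * φ.eval (x j.castSucc)

/-- Membership in the space `V_h^k` of piecewise polynomials of degree at most `k`. -/
def memV (k : ℕ) (ω : Fin N → Polynomial ℝ) : Prop :=
  ∀ j, (ω j).degree ≤ (k : WithBot ℕ)

/-- `L⁻(ω, φ)`. -/
def Lm [NeZero N] (x : Fin (N + 1) → ℝ) (ω φ : Fin N → Polynomial ℝ) : ℝ :=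
  ∑ j, (-(ipj x ω j (derivative (φ j))) + bdj x (trM x ω) j (φ j))

/-- `L⁺(ω, φ)`. -/
def Lp [NeZero N] (x : Fin (N + 1) → ℝ) (ω φ : Fin N → Polynomial ℝ) : ℝ :=
  ∑ j, (-(ipj x ω j (derivative (φ j))) + bdj x (trP x ω) j (φ j))

/-- `L^c(ω, φ)`. -/
def Lc [NeZero N] (x : Fin (N + 1) → ℝ) (ω φ : Fin N → Polynomial ℝ) : ℝ :=
  ∑ j, (-(ipj x ω j (derivative (φ j))) + bdj x (trA x ω) j (φ j))

/-- Godunov numerical flux. -/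
def godunov (f : ℝ → ℝ) (c d : ℝ) : ℝ :=
  if c < d then sInf (f '' Set.Icc c d) else sSup (f '' Set.Icc d c)

/-- Conservative numerical flux for `f(u) = u^p/p`, `F(u) = u^(p+1)/(p(p+1))`. -/
def consFlux (p : ℕ) (c d : ℝ) : ℝ :=
  if c = d then c ^ p / (p : ℝ)
  else (d ^ (p + 1) / ((p : ℝ) * ((p : ℝ) + 1)) - c ^ (p + 1) / ((p : ℝ) * ((p : ℝ) + 1))) / (d - c)

/-- Dissipative (Godunov-flux) nonlinear form `N^d`. -/
def Nd [NeZero N] (x : Fin (N + 1) → ℝ) (f : ℝ → ℝ) (ω φ : Fin N → Polynomial ℝ) : ℝ :=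
  ∑ j, (-(ipfj x f ω j (derivative (φ j)))
    + bdj x (fun i => godunov f (trM x ω i) (trP x ω i)) j (φ j))

/-- Conservative-flux nonlinear form `N^c`. -/
def Nc [NeZero N] (x : Fin (N + 1) → ℝ) (p : ℕ) (ω φ : Fin N → Polynomial ℝ) : ℝ :=
  ∑ j, (-(ipfj x (fun w => w ^ p / (p : ℝ)) ω j (derivative (φ j)))
    + bdj x (fun i => consFlux p (trM x ω i) (trP x ω i)) j (φ j))

end FW

/-!
With `E = s_h + ∂ₜu_h` and `Q = p_h + ∂ₜr_h`, differentiating (i) and (ii) in time and adding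
(iii) and (iv) gives, for every test polynomial `φ` of degree at most `k`,
`(E, φ) = ⟨{Q}, φ⟩ - (Q, φ')` and `(Q, φ) = ⟨{E}, φ⟩ - (E, φ') - (u_h, φ)`.
Since `E` and `Q` lie in `V_h^k` they may be used as test functions: testing the first relation
with `E`, the second with `Q` and summing over the cells turns the right-hand sides into
`L^c(Q, E) + L^c(E, Q)`. This vanishes because the central flux is skew-symmetric: after
integration by parts the contribution of each cell is a difference of the interface values
`(E⁺Q⁻ + E⁻Q⁺)/2`, which telescopes over the periodic mesh.
-/

theorem UniqueDiffWithinAt.eq_deriv_of_eqOn {s : Set ℝ} {t : ℝ} {f g : ℝ → ℝ} {f' g' : ℝ}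
    (hs : UniqueDiffWithinAt ℝ s t) (ht : t ∈ s) (hfg : EqOn f g s)
    (hf : HasDerivWithinAt f f' s t) (hg : HasDerivWithinAt g g' s t) : f' = g' :=
  hs.eq_deriv s hf (hg.congr_of_mem (fun _ hσ => hfg hσ) ht)

namespace FW

open Finset

section TimeDerivative

variable {s : Set ℝ} {t : ℝ} {k : ℕ}

theorem hasDerivWithinAt_linearMap_of_coeff (L : ℝ[X] →ₗ[ℝ] ℝ) {P : ℝ → ℝ[X]} {P' : ℝ[X]}
    (ht : t ∈ s) (hP : ∀ σ ∈ s, (P σ).degree ≤ k) (hP' : P'.degree ≤ k)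
    (hder : ∀ m, HasDerivWithinAt (fun σ => (P σ).coeff m) (P'.coeff m) s t) :
    HasDerivWithinAt (fun σ => L (P σ)) (L P') s t := by
  have expand : ∀ Q : ℝ[X], Q.degree ≤ k →
      L Q = ∑ m ∈ range (k + 1), Q.coeff m * L (X ^ m) := by
    intro Q hQ
    conv_lhs =>
      rw [Q.as_sum_range' (k + 1) (Nat.lt_succ_of_le (natDegree_le_iff_degree_le.mpr hQ))]
    simp only [map_sum, ← smul_X_eq_monomial, map_smul, smul_eq_mul]
  rw [expand P' hP']
  exact (HasDerivWithinAt.fun_sum fun m _ => (hder m).mul_const _).congr_of_mem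
    (fun σ hσ => expand _ (hP σ hσ)) ht

def intervalPairing (c d : ℝ) (φ : ℝ[X]) : ℝ[X] →ₗ[ℝ] ℝ where
  toFun P := ∫ y in c..d, P.eval y * φ.eval y
  map_add' P Q := by
    simp only [eval_add, add_mul]
    exact intervalIntegral.integral_add ((P.continuous.mul φ.continuous).intervalIntegrable _ _)
      ((Q.continuous.mul φ.continuous).intervalIntegrable _ _)
  map_smul' a P := by simp [mul_assoc]

variable {N : ℕ} {v : ℝ → Fin N → ℝ[X]} {v' : Fin N → ℝ[X]}

theorem hasDerivWithinAt_ipj (x : Fin (N + 1) → ℝ) (j : Fin N) (φ : ℝ[X]) (ht : t ∈ s)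
    (hv : ∀ σ ∈ s, memV k (v σ)) (hv' : memV k v')
    (hder : ∀ i m, HasDerivWithinAt (fun σ => (v σ i).coeff m) ((v' i).coeff m) s t) :
    HasDerivWithinAt (fun σ => ipj x (v σ) j φ) (ipj x v' j φ) s t :=
  hasDerivWithinAt_linearMap_of_coeff (intervalPairing _ _ φ) ht (fun σ hσ => hv σ hσ j) (hv' j)
    (hder j)

theorem hasDerivWithinAt_bdj_trA [NeZero N] (x : Fin (N + 1) → ℝ) (j : Fin N) (φ : ℝ[X])
    (ht : t ∈ s) (hv : ∀ σ ∈ s, memV k (v σ)) (hv' : memV k v')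
    (hder : ∀ i m, HasDerivWithinAt (fun σ => (v σ i).coeff m) ((v' i).coeff m) s t) :
    HasDerivWithinAt (fun σ => bdj x (trA x (v σ)) j φ) (bdj x (trA x v') j φ) s t := by
  have heval : ∀ i c, HasDerivWithinAt (fun σ => (v σ i).eval c) ((v' i).eval c) s t :=
    fun i c => hasDerivWithinAt_linearMap_of_coeff (leval c) ht (fun σ hσ => hv σ hσ i) (hv' i)
      (hder i)
  exact ((((heval _ _).add (heval _ _)).div_const 2).mul_const _).sub
    ((((heval _ _).add (heval _ _)).div_const 2).mul_const _)

end TimeDerivative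

variable {N k : ℕ}

theorem memV_add {v w : Fin N → ℝ[X]} (hv : memV k v) (hw : memV k w) : memV k (v + w) :=
  fun j => (degree_add_le _ _).trans (max_le (hv j) (hw j))

theorem ipj_add (x : Fin (N + 1) → ℝ) (v w : Fin N → ℝ[X]) (j : Fin N) (φ : ℝ[X]) :
    ipj x (v + w) j φ = ipj x v j φ + ipj x w j φ :=
  map_add (intervalPairing _ _ φ) (v j) (w j)

variable [NeZero N]

theorem bdj_trA_add (x : Fin (N + 1) → ℝ) (v w : Fin N → ℝ[X]) (j : Fin N) (φ : ℝ[X]) :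
    bdj x (trA x (v + w)) j φ = bdj x (trA x v) j φ + bdj x (trA x w) j φ := by
  simp only [bdj, trA, trP, trM, Pi.add_apply, eval_add]
  ring

theorem trP_sub_one (x : Fin (N + 1) → ℝ) (v : Fin N → ℝ[X]) (j : Fin N) :
    trP x v (j - 1) = (v j).eval (x j.castSucc) := by
  simp [trP]

def centralFlux (x : Fin (N + 1) → ℝ) (E Q : Fin N → ℝ[X]) (i : Fin N) : ℝ :=
  (trP x E i * trM x Q i + trM x E i * trP x Q i) / 2

theorem Lc_cell_add_swap (x : Fin (N + 1) → ℝ) (E Q : Fin N → ℝ[X]) (j : Fin N) :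
    (-ipj x E j (derivative (Q j)) + bdj x (trA x E) j (Q j))
      + (-ipj x Q j (derivative (E j)) + bdj x (trA x Q) j (E j))
      = centralFlux x E Q j - centralFlux x E Q (j - 1) := by
  have hparts : ipj x E j (derivative (Q j)) + ipj x Q j (derivative (E j))
      = trM x E j * trM x Q j - trP x E (j - 1) * trP x Q (j - 1) := by
    rw [ipj, intervalIntegral.integral_mul_deriv_eq_deriv_mul (fun y _ => (E j).hasDerivAt y)
      (fun y _ => (Q j).hasDerivAt y) ((derivative (E j)).continuous.intervalIntegrable _ _)
      ((derivative (Q j)).continuous.intervalIntegrable _ _)]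
    simp only [ipj, trM, trP_sub_one, mul_comm (eval _ (derivative (E j)))]
    ring
  simp only [centralFlux, bdj, trA, trM, trP_sub_one] at hparts ⊢
  linear_combination -hparts

theorem Lc_add_Lc_swap (x : Fin (N + 1) → ℝ) (E Q : Fin N → ℝ[X]) : Lc x E Q + Lc x Q E = 0 := by
  rw [Lc, Lc, ← sum_add_distrib, sum_congr rfl fun j _ => Lc_cell_add_swap x E Q j,
    sum_sub_distrib, sub_eq_zero]
  exact (Fintype.sum_equiv (Equiv.subRight 1) _ _ fun _ => rfl).symm

theorem energy_eq_zero_of_central_relations (x : Fin (N + 1) → ℝ) {u E Q : Fin N → ℝ[X]}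
    (hE : ∀ j, ipj x E j (E j) = bdj x (trA x Q) j (E j) - ipj x Q j (derivative (E j)))
    (hQ : ∀ j, ipj x Q j (Q j)
      = bdj x (trA x E) j (Q j) - ipj x E j (derivative (Q j)) - ipj x u j (Q j)) :
    ∑ j, ipj x E j (E j) + ∑ j, ipj x Q j (Q j) + ∑ j, ipj x u j (Q j) = 0 := by
  rw [← Lc_add_Lc_swap x E Q, Lc, Lc, ← sum_add_distrib, ← sum_add_distrib, ← sum_add_distrib]
  exact sum_congr rfl fun j _ => by linarith [hE j, hQ j]

theorem energy_identity_of_differentiated_scheme (x : Fin (N + 1) → ℝ)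
    {u s u' ph r' w' : Fin N → ℝ[X]}
    (hE : memV k (s + u')) (hQ : memV k (ph + r'))
    (h1 : ∀ j φ, φ.degree ≤ (k : WithBot ℕ) →
      ipj x u' j φ - bdj x (trA x r') j φ + ipj x r' j (derivative φ) = ipj x w' j φ)
    (h2 : ∀ j φ, φ.degree ≤ (k : WithBot ℕ) →
      ipj x r' j φ - bdj x (trA x u') j φ + ipj x u' j (derivative φ) = 0)
    (h3 : ∀ j φ, φ.degree ≤ (k : WithBot ℕ) →
      ipj x w' j φ + ipj x s j φ = bdj x (trA x ph) j φ - ipj x ph j (derivative φ))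
    (h4 : ∀ j φ, φ.degree ≤ (k : WithBot ℕ) →
      ipj x ph j φ = bdj x (trA x s) j φ - ipj x s j (derivative φ) - ipj x u j φ) :
    (∑ j, ∫ y in (x j.castSucc)..(x j.succ), ((s j).eval y + (u' j).eval y) ^ 2)
      + (∑ j, ∫ y in (x j.castSucc)..(x j.succ), ((ph j).eval y + (r' j).eval y) ^ 2)
      + (∑ j, ∫ y in (x j.castSucc)..(x j.succ), (u j).eval y * ((ph j).eval y + (r' j).eval y))
      = 0 := by
  have hEE : ∀ j, ipj x (s + u') j ((s + u') j)
      = bdj x (trA x (ph + r')) j ((s + u') j) - ipj x (ph + r') j (derivative ((s + u') j)) := by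
    intro j
    have := h1 j _ (hE j)
    have := h3 j _ (hE j)
    simp only [ipj_add, bdj_trA_add]
    linarith
  have hQQ : ∀ j, ipj x (ph + r') j ((ph + r') j) = bdj x (trA x (s + u')) j ((ph + r') j)
      - ipj x (s + u') j (derivative ((ph + r') j)) - ipj x u j ((ph + r') j) := by
    intro j
    have := h2 j _ (hQ j)
    have := h4 j _ (hQ j)
    simp only [ipj_add, bdj_trA_add]
    linarith
  simpa only [ipj, Pi.add_apply, eval_add, sq] using
    energy_eq_zero_of_central_relations x hEE hQQ

end FW

theorem stmt19_general {N : ℕ} [NeZero N] (x : Fin (N + 1) → ℝ) (k : ℕ) (T : ℝ) (hT : 0 < T)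
    (u u' r r' w w' ph s : ℝ → Fin N → Polynomial ℝ)
    (hdeg : ∀ t ∈ Set.Icc (0:ℝ) T,
      FW.memV k (u t) ∧ FW.memV k (u' t) ∧ FW.memV k (r t) ∧ FW.memV k (r' t)
        ∧ FW.memV k (w t) ∧ FW.memV k (w' t) ∧ FW.memV k (ph t) ∧ FW.memV k (s t))
    (hderu : ∀ t ∈ Set.Icc (0:ℝ) T, ∀ (j : Fin N) (m : ℕ),
      HasDerivWithinAt (fun σ => (u σ j).coeff m) ((u' t j).coeff m) (Set.Icc (0:ℝ) T) t)
    (hderr : ∀ t ∈ Set.Icc (0:ℝ) T, ∀ (j : Fin N) (m : ℕ),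
      HasDerivWithinAt (fun σ => (r σ j).coeff m) ((r' t j).coeff m) (Set.Icc (0:ℝ) T) t)
    (hderw : ∀ t ∈ Set.Icc (0:ℝ) T, ∀ (j : Fin N) (m : ℕ),
      HasDerivWithinAt (fun σ => (w σ j).coeff m) ((w' t j).coeff m) (Set.Icc (0:ℝ) T) t)
    (heq1 : ∀ t ∈ Set.Icc (0:ℝ) T, ∀ (j : Fin N), ∀ φ : Polynomial ℝ,
      φ.degree ≤ (k : WithBot ℕ) →
      FW.ipj x (u t) j φ - FW.bdj x (FW.trA x (r t)) j φ
          + FW.ipj x (r t) j (Polynomial.derivative φ)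
        = FW.ipj x (w t) j φ)
    (heq2 : ∀ t ∈ Set.Icc (0:ℝ) T, ∀ (j : Fin N), ∀ φ : Polynomial ℝ,
      φ.degree ≤ (k : WithBot ℕ) →
      FW.ipj x (r t) j φ - FW.bdj x (FW.trA x (u t)) j φ
          + FW.ipj x (u t) j (Polynomial.derivative φ) = 0)
    (heq3 : ∀ t ∈ Set.Icc (0:ℝ) T, ∀ (j : Fin N), ∀ φ : Polynomial ℝ,
      φ.degree ≤ (k : WithBot ℕ) →
      FW.ipj x (w' t) j φ + FW.ipj x (s t) j φ
        = FW.bdj x (FW.trA x (ph t)) j φ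
          - FW.ipj x (ph t) j (Polynomial.derivative φ))
    (heq4 : ∀ t ∈ Set.Icc (0:ℝ) T, ∀ (j : Fin N), ∀ φ : Polynomial ℝ,
      φ.degree ≤ (k : WithBot ℕ) →
      FW.ipj x (ph t) j φ
        = FW.bdj x (FW.trA x (s t)) j φ
          - FW.ipj x (s t) j (Polynomial.derivative φ) - FW.ipj x (u t) j φ) :
    ∀ t ∈ Set.Icc (0:ℝ) T,
      (∑ j : Fin N, ∫ y in (x j.castSucc)..(x j.succ),
          ((s t j).eval y + (u' t j).eval y) ^ 2)
        + (∑ j : Fin N, ∫ y in (x j.castSucc)..(x j.succ),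
          ((ph t j).eval y + (r' t j).eval y) ^ 2)
        + (∑ j : Fin N, ∫ y in (x j.castSucc)..(x j.succ),
          (u t j).eval y * ((ph t j).eval y + (r' t j).eval y)) = 0 := by
  intro t ht
  obtain ⟨-, hu', -, hr', -, hw', hph, hs⟩ := hdeg t ht
  have hU : UniqueDiffWithinAt ℝ (Set.Icc 0 T) t := uniqueDiffOn_Icc hT t ht
  have hu σ hσ := (hdeg σ hσ).1
  have hr σ hσ := (hdeg σ hσ).2.2.1
  have hw σ hσ := (hdeg σ hσ).2.2.2.2.1
  have h1 j φ (hφ : φ.degree ≤ (k : WithBot ℕ)) :=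
    hU.eq_deriv_of_eqOn ht (fun σ hσ => heq1 σ hσ j φ hφ)
      (((FW.hasDerivWithinAt_ipj x j φ ht hu hu' (hderu t ht)).sub
        (FW.hasDerivWithinAt_bdj_trA x j φ ht hr hr' (hderr t ht))).add
        (FW.hasDerivWithinAt_ipj x j _ ht hr hr' (hderr t ht)))
      (FW.hasDerivWithinAt_ipj x j φ ht hw hw' (hderw t ht))
  have h2 j φ (hφ : φ.degree ≤ (k : WithBot ℕ)) :=
    hU.eq_deriv_of_eqOn ht (fun σ hσ => heq2 σ hσ j φ hφ)
      (((FW.hasDerivWithinAt_ipj x j φ ht hr hr' (hderr t ht)).sub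
        (FW.hasDerivWithinAt_bdj_trA x j φ ht hu hu' (hderu t ht))).add
        (FW.hasDerivWithinAt_ipj x j _ ht hu hu' (hderu t ht)))
      (hasDerivWithinAt_const t _ 0)
  exact FW.energy_identity_of_differentiated_scheme x (FW.memV_add hs hu') (FW.memV_add hph hr')
    h1 h2 (heq3 t ht) (heq4 t ht)

theorem stmt19 {N : ℕ} [NeZero N] (hN : 1 ≤ N) (a b : ℝ) (hab : a < b)
    (x : Fin (N + 1) → ℝ) (hx : StrictMono x) (hxa : x 0 = a) (hxb : x (Fin.last N) = b)
    (k : ℕ) (p : ℕ) (hp : 2 ≤ p) (T : ℝ) (hT : 0 < T)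
    (u u' r r' w w' ph s : ℝ → Fin N → Polynomial ℝ)
    (hdeg : ∀ t ∈ Set.Icc (0:ℝ) T,
      FW.memV k (u t) ∧ FW.memV k (u' t) ∧ FW.memV k (r t) ∧ FW.memV k (r' t)
        ∧ FW.memV k (w t) ∧ FW.memV k (w' t) ∧ FW.memV k (ph t) ∧ FW.memV k (s t))
    (hderu : ∀ t ∈ Set.Icc (0:ℝ) T, ∀ (j : Fin N) (m : ℕ),
      HasDerivWithinAt (fun σ => (u σ j).coeff m) ((u' t j).coeff m) (Set.Icc (0:ℝ) T) t)
    (hderr : ∀ t ∈ Set.Icc (0:ℝ) T, ∀ (j : Fin N) (m : ℕ),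
      HasDerivWithinAt (fun σ => (r σ j).coeff m) ((r' t j).coeff m) (Set.Icc (0:ℝ) T) t)
    (hderw : ∀ t ∈ Set.Icc (0:ℝ) T, ∀ (j : Fin N) (m : ℕ),
      HasDerivWithinAt (fun σ => (w σ j).coeff m) ((w' t j).coeff m) (Set.Icc (0:ℝ) T) t)
    (heq1 : ∀ t ∈ Set.Icc (0:ℝ) T, ∀ (j : Fin N), ∀ φ : Polynomial ℝ,
      φ.degree ≤ (k : WithBot ℕ) →
      FW.ipj x (u t) j φ - FW.bdj x (FW.trA x (r t)) j φ
          + FW.ipj x (r t) j (Polynomial.derivative φ)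
        = FW.ipj x (w t) j φ)
    (heq2 : ∀ t ∈ Set.Icc (0:ℝ) T, ∀ (j : Fin N), ∀ φ : Polynomial ℝ,
      φ.degree ≤ (k : WithBot ℕ) →
      FW.ipj x (r t) j φ - FW.bdj x (FW.trA x (u t)) j φ
          + FW.ipj x (u t) j (Polynomial.derivative φ) = 0)
    (heq3 : ∀ t ∈ Set.Icc (0:ℝ) T, ∀ (j : Fin N), ∀ φ : Polynomial ℝ,
      φ.degree ≤ (k : WithBot ℕ) →
      FW.ipj x (w' t) j φ + FW.ipj x (s t) j φ
        = FW.bdj x (FW.trA x (ph t)) j φ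
          - FW.ipj x (ph t) j (Polynomial.derivative φ))
    (heq4 : ∀ t ∈ Set.Icc (0:ℝ) T, ∀ (j : Fin N), ∀ φ : Polynomial ℝ,
      φ.degree ≤ (k : WithBot ℕ) →
      FW.ipj x (ph t) j φ
        = FW.bdj x (FW.trA x (s t)) j φ
          - FW.ipj x (s t) j (Polynomial.derivative φ) - FW.ipj x (u t) j φ)
    (heq5 : ∀ t ∈ Set.Icc (0:ℝ) T, ∀ (j : Fin N), ∀ φ : Polynomial ℝ,
      φ.degree ≤ (k : WithBot ℕ) →
      FW.ipj x (s t) j φ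
        = FW.bdj x (fun i => FW.consFlux p (FW.trM x (u t) i) (FW.trP x (u t) i)) j φ
          - FW.ipfj x (fun w => w ^ p / (p : ℝ)) (u t) j (Polynomial.derivative φ)) :
    ∀ t ∈ Set.Icc (0:ℝ) T,
      (∑ j : Fin N, ∫ y in (x j.castSucc)..(x j.succ),
          ((s t j).eval y + (u' t j).eval y) ^ 2)
        + (∑ j : Fin N, ∫ y in (x j.castSucc)..(x j.succ),
          ((ph t j).eval y + (r' t j).eval y) ^ 2)
        + (∑ j : Fin N, ∫ y in (x j.castSucc)..(x j.succ),
          (u t j).eval y * ((ph t j).eval y + (r' t j).eval y)) = 0 :=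
  stmt19_general x k T hT u u' r r' w w' ph s hdeg hderu hderr hderw heq1 heq2 heq3 heq4
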